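/- arXiv:2410.09795 — 2 statements merged into one kernel-verified Lean document; each statement's English description precedes it below -/
import Mathlib

section
/- Let N, D be positive integers, let A ∈ ℝ^{D×D} be a matrix, let R = (r_{ij}) ∈ ℝ^{N×N}, fix an index i, and let μ_1,…,μ_N be finite compactly supported Borel measures on ℝ^D. Then the function F : ℝ^D → ℝ defined by F(x) = Σ_{j=1}^N ∫ exp(⟨x, A x′⟩ + r_{ij}) dμ_j(x′) is differentiable on all of ℝ^D, with gradient ∇F(x) = Σ_{j=1}^N ∫ exp(⟨x, A x′⟩ + r_{ij}) A x′ dμ_j(x′). Consequently the attention operator T⁰_{μ_i}(x) = −Σ_{j=1}^N ∫ exp(⟨x, A x′⟩ + r_{ij}) A x′ dμ_j(x′) equals −∇F(x), the negative spatial gradient of the first variation of the energy E of Proposition 2. -/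
open scoped RealInnerProductSpace BigOperators
open MeasureTheory Filter Topology InnerProductSpace

/-!
Differentiation under the integral sign. The gradient `exp (⟪y, A x'⟫ + r) • A x'` of the
integrand is jointly continuous in `(y, x')`, so by the tube lemma it is bounded uniformly for `y`
near `x` and `x'` in the compact set carrying `μ j`; a constant dominates it because `μ j` is
finite.
-/

theorem IsCompact.exists_eventually_forall_norm_le {E X F : Type*} [TopologicalSpace E]
    [TopologicalSpace X] [NormedAddCommGroup F] {K : Set X} (hK : IsCompact K) {g : E → X → F}
    (hg : Continuous (Function.uncurry g)) (x : E) :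
    ∃ C, ∀ᶠ y in 𝓝 x, ∀ a ∈ K, ‖g y a‖ ≤ C := by
  obtain ⟨C, hC⟩ := hK.exists_bound_of_continuousOn
    (hg.comp (Continuous.prodMk_right x)).continuousOn
  refine ⟨C + 1, hK.eventually_forall_of_forall_eventually fun a ha => ?_⟩
  have hlt : ‖g x a‖ < C + 1 := (hC a ha).trans_lt (lt_add_one C)
  exact (hg.norm.continuousAt.eventually (gt_mem_nhds hlt)).mono fun _ h => h.le

section ParametricIntegral

variable {X E F : Type*} [TopologicalSpace X] [T2Space X] [MeasurableSpace X]
  [OpensMeasurableSpace X] {μ : Measure X} [IsFiniteMeasure μ] {K : Set X}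

theorem hasFDerivAt_integral_of_ae_mem_isCompact [NormedAddCommGroup E] [NormedSpace ℝ E]
    [NormedAddCommGroup F] [NormedSpace ℝ F] (hK : IsCompact K) (hμK : ∀ᵐ a ∂μ, a ∈ K)
    {f : E → X → F} {f' : E → X → E →L[ℝ] F} (hf : ∀ y, Continuous (f y))
    (hf' : Continuous (Function.uncurry f')) (hderiv : ∀ y a, HasFDerivAt (f · a) (f' y a) y)
    (x : E) : HasFDerivAt (fun y => ∫ a, f y a ∂μ) (∫ a, f' x a ∂μ) x := by
  have hKm : MeasurableSet K := hK.measurableSet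
  rw [← Measure.restrict_eq_self_of_ae_mem hμK]
  obtain ⟨C, hC⟩ := hK.exists_eventually_forall_norm_le hf' x
  refine hasFDerivAt_integral_of_dominated_of_fderiv_le (bound := fun _ => C) hC
    (.of_forall fun y => (hf y).continuousOn.aestronglyMeasurable_of_isCompact hK hKm)
    ((hf x).continuousOn.integrableOn_compact hK)
    ((hf'.comp (Continuous.prodMk_right x)).continuousOn.aestronglyMeasurable_of_isCompact hK hKm)
    ?_ (integrable_const C) (.of_forall fun a y _ => hderiv y a)
  filter_upwards [ae_restrict_mem hKm] with a ha y hy using hy a ha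

theorem hasGradientAt_integral_of_ae_mem_isCompact [NormedAddCommGroup E]
    [InnerProductSpace ℝ E] [CompleteSpace E] (hK : IsCompact K) (hμK : ∀ᵐ a ∂μ, a ∈ K)
    {f : E → X → ℝ} {g : E → X → E} (hf : ∀ y, Continuous (f y))
    (hg : Continuous (Function.uncurry g)) (hgrad : ∀ y a, HasGradientAt (f · a) (g y a) y)
    (x : E) : HasGradientAt (fun y => ∫ a, f y a ∂μ) (∫ a, g x a ∂μ) x := by
  have hcomm : ∫ a, toDual ℝ E (g x a) ∂μ = toDual ℝ E (∫ a, g x a ∂μ) :=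
    (toDual ℝ E).toLinearIsometry.integral_comp_comm _
  rw [hasGradientAt_iff_hasFDerivAt, ← hcomm]
  exact hasFDerivAt_integral_of_ae_mem_isCompact (f' := fun y a => toDual ℝ E (g y a)) hK hμK hf
    ((toDual ℝ E).continuous.comp hg)
    (fun y a => hasGradientAt_iff_hasFDerivAt.mp (hgrad y a)) x

end ParametricIntegral

theorem hasGradientAt_exp_inner_add {E : Type*} [NormedAddCommGroup E] [InnerProductSpace ℝ E]
    [CompleteSpace E] (v : E) (c : ℝ) (y : E) :
    HasGradientAt (fun y => Real.exp (⟪y, v⟫ + c)) (Real.exp (⟪y, v⟫ + c) • v) y := by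
  have hinner : HasFDerivAt (fun y : E => ⟪v, y⟫ + c) (toDual ℝ E v) y :=
    (toDual ℝ E v).hasFDerivAt.add_const c
  rw [hasGradientAt_iff_hasFDerivAt, map_smul]
  simp_rw [real_inner_comm v]
  exact (Real.hasDerivAt_exp _).comp_hasFDerivAt y hinner

theorem stmt3_general (N D : ℕ)
    (A : EuclideanSpace ℝ (Fin D) →L[ℝ] EuclideanSpace ℝ (Fin D))
    (R : Fin N → Fin N → ℝ) (i : Fin N)
    (μ : Fin N → Measure (EuclideanSpace ℝ (Fin D)))
    [∀ j, IsFiniteMeasure (μ j)]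
    (hμc : ∀ j, ∃ K : Set (EuclideanSpace ℝ (Fin D)), IsCompact K ∧ μ j Kᶜ = 0)
    (x : EuclideanSpace ℝ (Fin D)) :
    HasGradientAt
      (fun y : EuclideanSpace ℝ (Fin D) =>
        ∑ j : Fin N, ∫ x', Real.exp (⟪y, A x'⟫ + R i j) ∂(μ j))
      (∑ j : Fin N, ∫ x', Real.exp (⟪x, A x'⟫ + R i j) • A x' ∂(μ j)) x := by
  rw [hasGradientAt_iff_hasFDerivAt, map_sum]
  refine HasFDerivAt.fun_sum fun j _ => ?_
  obtain ⟨K, hK, hμK⟩ := hμc j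
  rw [← hasGradientAt_iff_hasFDerivAt]
  exact hasGradientAt_integral_of_ae_mem_isCompact hK (mem_ae_iff.mpr hμK) (by fun_prop)
    (by fun_prop) (fun y x' => hasGradientAt_exp_inner_add (A x') (R i j) y) x

/-- For a matrix `A` (modeled as a continuous linear operator on `ℝ^D`),
`R ∈ ℝ^{N×N}`, a fixed index `i`, and finite compactly supported Borel measures
`μ₁,…,μ_N` on `ℝ^D`, the first-variation function
`F(x) = ∑_j ∫ exp(⟨x, A x'⟩ + r_{ij}) dμ_j(x')` is differentiable everywhere, with gradient
`∇F(x) = ∑_j ∫ exp(⟨x, A x'⟩ + r_{ij}) A x' dμ_j(x')`; hence the attention operator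
`T⁰_{μ_i}(x) = -∑_j ∫ exp(⟨x, A x'⟩ + r_{ij}) A x' dμ_j(x')` equals `-∇F(x)`. -/
theorem stmt3 (N D : ℕ) (hN : 0 < N) (hD : 0 < D)
    (A : EuclideanSpace ℝ (Fin D) →L[ℝ] EuclideanSpace ℝ (Fin D))
    (R : Fin N → Fin N → ℝ) (i : Fin N)
    (μ : Fin N → Measure (EuclideanSpace ℝ (Fin D)))
    [∀ j, IsFiniteMeasure (μ j)]
    (hμc : ∀ j, ∃ K : Set (EuclideanSpace ℝ (Fin D)), IsCompact K ∧ μ j Kᶜ = 0)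
    (x : EuclideanSpace ℝ (Fin D)) :
    HasGradientAt
      (fun y : EuclideanSpace ℝ (Fin D) =>
        ∑ j : Fin N, ∫ x', Real.exp (⟪y, A x'⟫ + R i j) ∂(μ j))
      (∑ j : Fin N, ∫ x', Real.exp (⟪x, A x'⟫ + R i j) • A x' ∂(μ j)) x :=
  stmt3_general N D A R i μ hμc x
end

section
/- Let X ∈ ℝ^{N×D} with rows x_1,…,x_N ∈ ℝ^D, let W ∈ ℝ^{D×D}, set A = W Wᵀ, and let R = (r_{ij}) ∈ ℝ^{N×N}. Define the latent distance matrix D_X ∈ ℝ^{N×N} by (D_X)_{ij} = (1/2)‖Wᵀ x_i − Wᵀ x_j‖₂² − r_{ij}. Then for every doubly stochastic matrix P ∈ ℝ^{N×N}: ⟨D_X, P⟩_F + ⟨X A Xᵀ + R, P⟩_F = Σ_{i=1}^N ‖Wᵀ x_i‖₂²; that is, the sum of the two transport costs is a constant independent of P. -/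
open scoped BigOperators
open Matrix

def frobInner {m n : Type*} [Fintype m] [Fintype n]
    (U V : Matrix m n ℝ) : ℝ :=
  ∑ i, ∑ j, U i j * V i j

/-! With `y_i = Wᵀ x_i`, the Gram matrix `X A Xᵀ` has entries `⟨y_i, y_j⟩`, so by the polarization
identity `D_X + X A Xᵀ + R` has entries `c_i + c_j` with `c_i = ½‖y_i‖²`. Pairing such a matrix
with a matrix whose rows and columns all sum to `1` gives `∑ c_i + ∑ c_j`, whatever the matrix is. -/

section FrobInner

variable {m n : Type*} [Fintype m] [Fintype n]

theorem frobInner_add_left (U V P : Matrix m n ℝ) :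
    frobInner (U + V) P = frobInner U P + frobInner V P := by
  simp only [frobInner, Matrix.add_apply, add_mul, Finset.sum_add_distrib]

theorem frobInner_eq_sum_add_sum_of_apply_eq_add {M P : Matrix m n ℝ} {a : m → ℝ} {b : n → ℝ}
    (hM : ∀ i j, M i j = a i + b j)
    (hProw : ∀ i, ∑ j, P i j = 1) (hPcol : ∀ j, ∑ i, P i j = 1) :
    frobInner M P = ∑ i, a i + ∑ j, b j := by
  have hrow : ∑ i, ∑ j, a i * P i j = ∑ i, a i := by
    simp only [← Finset.mul_sum, hProw, mul_one]
  have hcol : ∑ i, ∑ j, b j * P i j = ∑ j, b j := by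
    rw [Finset.sum_comm]
    simp only [← Finset.mul_sum, hPcol, mul_one]
  simp only [frobInner, hM, add_mul, Finset.sum_add_distrib, hrow, hcol]

end FrobInner

theorem mul_mul_transpose_mul_transpose_apply {m n k : Type*} [Fintype n] [Fintype k]
    (X : Matrix m n ℝ) (W : Matrix n k ℝ) (i j : m) :
    (X * (W * Wᵀ) * Xᵀ) i j = (Wᵀ *ᵥ X i) ⬝ᵥ (Wᵀ *ᵥ X j) := by
  have hrow : ∀ l, (X * W) l = Wᵀ *ᵥ X l := fun l => by
    rw [mul_apply_eq_vecMul, mulVec_transpose]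
  rw [← Matrix.mul_assoc, Matrix.mul_assoc (X * W), ← transpose_mul, mul_apply]
  simp only [dotProduct, transpose_apply, ← hrow]

theorem half_sum_sub_sq_add_dotProduct {k : Type*} [Fintype k] (u v : k → ℝ) :
    (1 / 2 : ℝ) * ∑ d, (u d - v d) ^ 2 + u ⬝ᵥ v
      = (1 / 2 : ℝ) * ∑ d, u d ^ 2 + (1 / 2 : ℝ) * ∑ d, v d ^ 2 := by
  simp only [dotProduct, Finset.mul_sum, ← Finset.sum_add_distrib]
  exact Finset.sum_congr rfl fun d _ => by ring

theorem stmt5_general (N D : ℕ)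
    (X : Matrix (Fin N) (Fin D) ℝ)
    (W : Matrix (Fin D) (Fin D) ℝ)
    (A : Matrix (Fin D) (Fin D) ℝ) (hA : A = W * Wᵀ)
    (R : Matrix (Fin N) (Fin N) ℝ)
    (DX : Matrix (Fin N) (Fin N) ℝ)
    (hDX : ∀ i j, DX i j =
      (1 / 2 : ℝ) * ∑ d : Fin D, (Wᵀ.mulVec (X i) d - Wᵀ.mulVec (X j) d) ^ 2 - R i j)
    (P : Matrix (Fin N) (Fin N) ℝ)
    (hProw : ∀ i, ∑ j, P i j = 1)
    (hPcol : ∀ j, ∑ i, P i j = 1) :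
    frobInner DX P + frobInner (X * A * Xᵀ + R) P
      = ∑ i : Fin N, ∑ d : Fin D, (Wᵀ.mulVec (X i) d) ^ 2 := by
  set c : Fin N → ℝ := fun i => (1 / 2 : ℝ) * ∑ d, (Wᵀ *ᵥ X i) d ^ 2
  have hentry : ∀ i j, (DX + (X * A * Xᵀ + R)) i j = c i + c j := fun i j => by
    rw [Matrix.add_apply, Matrix.add_apply, hDX, hA, mul_mul_transpose_mul_transpose_apply,
      ← half_sum_sub_sq_add_dotProduct]
    ring
  rw [← frobInner_add_left, frobInner_eq_sum_add_sum_of_apply_eq_add hentry hProw hPcol,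
    ← Finset.sum_add_distrib]
  exact Finset.sum_congr rfl fun i _ => by ring

/-- With `A = W Wᵀ` and the latent distance matrix
`(D_X)_{ij} = (1/2)‖Wᵀ x_i − Wᵀ x_j‖₂² − r_{ij}`, for every doubly stochastic `P`:
`⟨D_X, P⟩_F + ⟨X A Xᵀ + R, P⟩_F = ∑_i ‖Wᵀ x_i‖₂²`, a constant independent of `P`. -/
theorem stmt5 (N D : ℕ)
    (X : Matrix (Fin N) (Fin D) ℝ)
    (W : Matrix (Fin D) (Fin D) ℝ)
    (A : Matrix (Fin D) (Fin D) ℝ) (hA : A = W * Wᵀ)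
    (R : Matrix (Fin N) (Fin N) ℝ)
    (DX : Matrix (Fin N) (Fin N) ℝ)
    (hDX : ∀ i j, DX i j =
      (1 / 2 : ℝ) * ∑ d : Fin D, (Wᵀ.mulVec (X i) d - Wᵀ.mulVec (X j) d) ^ 2 - R i j)
    (P : Matrix (Fin N) (Fin N) ℝ)
    (hP0 : ∀ i j, 0 ≤ P i j)
    (hProw : ∀ i, ∑ j, P i j = 1)
    (hPcol : ∀ j, ∑ i, P i j = 1) :
    frobInner DX P + frobInner (X * A * Xᵀ + R) P
      = ∑ i : Fin N, ∑ d : Fin D, (Wᵀ.mulVec (X i) d) ^ 2 :=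
  stmt5_general N D X W A hA R DX hDX P hProw hPcol
end
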